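/- arXiv:2505.11693 — 2 statements merged into one kernel-verified Lean document; each statement's English description precedes it below -/
import Mathlib

section
/- The proper rope cover of a finite set of arcs (viewed as unordered endpoint pairs, all distinct) is unique: if R1 and R2 are both proper rope covers of E, then R1 = R2. -/
/-! An arc in the symmetric difference of two proper rope covers is not in the other cover, so it
leans on an arc of the other cover, which by properness is again in the symmetric difference and is
strictly longer. A longest arc of the symmetric difference is therefore impossible. -/

/-- An arc is represented as a pair `(l, r)` with `l < r` (an unordered pair of endpoints).
Arc `a` leans on arc `b` if `l_b ≤ l_a < r_a ≤ r_b`, `a ≠ b`, and `l_a = l_b` or `r_a = r_b`. -/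
def leansOn (a b : ℕ × ℕ) : Prop :=
  b.1 ≤ a.1 ∧ a.1 < a.2 ∧ a.2 ≤ b.2 ∧ a ≠ b ∧ (a.1 = b.1 ∨ a.2 = b.2)

def IsRopeCover (E R : Finset (ℕ × ℕ)) : Prop :=
  R ⊆ E ∧ ∀ a ∈ E \ R, ∃ b ∈ R, leansOn a b

def IsProper (R : Finset (ℕ × ℕ)) : Prop := ∀ a ∈ R, ∀ b ∈ R, ¬ leansOn a b

theorem leansOn.length_lt {a b : ℕ × ℕ} (h : leansOn a b) : a.2 - a.1 < b.2 - b.1 := by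
  obtain ⟨hl, hlt, hr, hne, -⟩ := h
  have : a.1 ≠ b.1 ∨ a.2 ≠ b.2 := by
    by_contra! heq
    exact hne (Prod.ext heq.1 heq.2)
  omega

theorem IsRopeCover.exists_leansOn_mem_sdiff {E R S : Finset (ℕ × ℕ)} (hR : IsRopeCover E R)
    (hSE : S ⊆ E) (hS : IsProper S) {a : ℕ × ℕ} (ha : a ∈ S \ R) :
    ∃ b ∈ R \ S, leansOn a b := by
  obtain ⟨haS, haR⟩ := Finset.mem_sdiff.mp ha
  obtain ⟨b, hbR, hab⟩ := hR.2 a (Finset.mem_sdiff.mpr ⟨hSE haS, haR⟩)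
  exact ⟨b, Finset.mem_sdiff.mpr ⟨hbR, fun hbS => hS a haS b hbS hab⟩, hab⟩

theorem exists_leansOn_mem_symmDiff {E R₁ R₂ : Finset (ℕ × ℕ)}
    (h₁ : IsRopeCover E R₁) (h₁p : IsProper R₁) (h₂ : IsRopeCover E R₂) (h₂p : IsProper R₂)
    {a : ℕ × ℕ} (ha : a ∈ symmDiff R₁ R₂) :
    ∃ b ∈ symmDiff R₁ R₂, leansOn a b := by
  simp only [symmDiff_def, Finset.sup_eq_union, Finset.mem_union] at ha ⊢
  rcases ha with ha | ha
  · obtain ⟨b, hb, hab⟩ := h₂.exists_leansOn_mem_sdiff h₁.1 h₁p ha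
    exact ⟨b, Or.inr hb, hab⟩
  · obtain ⟨b, hb, hab⟩ := h₁.exists_leansOn_mem_sdiff h₂.1 h₂p ha
    exact ⟨b, Or.inl hb, hab⟩

theorem proper_ropeCover_unique_general (E : Finset (ℕ × ℕ))
    (R1 R2 : Finset (ℕ × ℕ))
    (h1 : IsRopeCover E R1) (h1p : IsProper R1)
    (h2 : IsRopeCover E R2) (h2p : IsProper R2) :
    R1 = R2 := by
  by_contra hne
  have hS : (symmDiff R1 R2).Nonempty :=
    Finset.nonempty_iff_ne_empty.mpr fun h => hne (symmDiff_eq_bot.mp h)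
  obtain ⟨a, ha, hmax⟩ := Finset.exists_max_image _ (fun p => p.2 - p.1) hS
  obtain ⟨b, hb, hab⟩ := exists_leansOn_mem_symmDiff h1 h1p h2 h2p ha
  exact (hmax b hb).not_gt hab.length_lt

/-- The proper rope cover of a finite set of arcs is unique. -/
theorem proper_ropeCover_unique (E : Finset (ℕ × ℕ)) (hE : ∀ a ∈ E, a.1 < a.2)
    (R1 R2 : Finset (ℕ × ℕ))
    (h1 : IsRopeCover E R1) (h1p : IsProper R1)
    (h2 : IsRopeCover E R2) (h2p : IsProper R2) :
    R1 = R2 :=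
  proper_ropeCover_unique_general E R1 R2 h1 h1p h2 h2p
end

section
/- The proper rope cover of a finite set of arcs E has minimum cardinality among all rope covers of E: for every rope cover R of E, |R_pr| ≤ |R|, where R_pr is the proper rope cover. -/
/-!
Send every arc `a` of the proper rope cover to an arc of `R` on which it leans, or to `a` itself
when `a ∈ R`. This map is injective. If two distinct proper arcs `a, a'` landed on the same `b`,
they cannot share the same endpoint of `b`, since then one would lean on the other. So `a` shares
the left end of `b` and `a'` the right end, say. Then `b` is not in the proper cover, so it leans on some
proper `c`; whichever end `b` shares with `c`, the arc among `a, a'` sharing that end leans on `c`.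
-/

lemma leansOn_or_leansOn_of_fst_eq {a b : ℕ × ℕ} (ha : a.1 < a.2) (hb : b.1 < b.2) (hab : a ≠ b)
    (h : a.1 = b.1) : leansOn a b ∨ leansOn b a := by
  rcases lt_or_gt_of_ne fun h' => hab (Prod.ext h h') with hlt | hlt
  · exact .inl ⟨h.ge, ha, hlt.le, hab, .inl h⟩
  · exact .inr ⟨h.le, hb, hlt.le, hab.symm, .inl h.symm⟩

lemma leansOn_or_leansOn_of_snd_eq {a b : ℕ × ℕ} (ha : a.1 < a.2) (hb : b.1 < b.2) (hab : a ≠ b)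
    (h : a.2 = b.2) : leansOn a b ∨ leansOn b a := by
  rcases lt_or_gt_of_ne fun h' => hab (Prod.ext h' h) with hlt | hlt
  · exact .inr ⟨hlt.le, hb, h.ge, hab.symm, .inr h.symm⟩
  · exact .inl ⟨hlt.le, ha, h.le, hab, .inr h⟩

lemma leansOn_trans_of_fst_eq {a b c : ℕ × ℕ} (hab : leansOn a b) (hbc : leansOn b c)
    (ha : a.1 = b.1) (hb : b.1 = c.1) : leansOn a c := by
  obtain ⟨-, ha12, hab2, hne, -⟩ := hab
  obtain ⟨-, -, hbc2, -, -⟩ := hbc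
  have : a.2 ≠ b.2 := fun h => hne (Prod.ext ha h)
  refine ⟨by omega, ha12, by omega, fun h => ?_, Or.inl (ha.trans hb)⟩
  subst h
  omega

lemma leansOn_trans_of_snd_eq {a b c : ℕ × ℕ} (hab : leansOn a b) (hbc : leansOn b c)
    (ha : a.2 = b.2) (hb : b.2 = c.2) : leansOn a c := by
  obtain ⟨hab1, ha12, -, hne, -⟩ := hab
  obtain ⟨hbc1, -, -, -, -⟩ := hbc
  have : a.1 ≠ b.1 := fun h => hne (Prod.ext h ha)
  refine ⟨by omega, ha12, by omega, fun h => ?_, Or.inr (ha.trans hb)⟩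
  subst h
  omega

lemma IsRopeCover.exists_eq_or_leansOn {E R : Finset (ℕ × ℕ)} (hR : IsRopeCover E R)
    {a : ℕ × ℕ} (ha : a ∈ E) : ∃ b ∈ R, a = b ∨ leansOn a b := by
  by_cases haR : a ∈ R
  · exact ⟨a, haR, Or.inl rfl⟩
  · obtain ⟨b, hb, hab⟩ := hR.2 a (Finset.mem_sdiff.2 ⟨ha, haR⟩)
    exact ⟨b, hb, Or.inr hab⟩

section Proper

variable {E P : Finset (ℕ × ℕ)} {a a' b : ℕ × ℕ}

lemma IsProper.eq_of_leansOn_of_fst_eq (hP : IsProper P) (ha : a ∈ P) (ha' : a' ∈ P)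
    (hab : leansOn a b) (ha'b : leansOn a' b) (h : a.1 = b.1) (h' : a'.1 = b.1) : a = a' := by
  by_contra hne
  rcases leansOn_or_leansOn_of_fst_eq hab.2.1 ha'b.2.1 hne (h.trans h'.symm) with l | l
  · exact hP a ha a' ha' l
  · exact hP a' ha' a ha l

lemma IsProper.eq_of_leansOn_of_snd_eq (hP : IsProper P) (ha : a ∈ P) (ha' : a' ∈ P)
    (hab : leansOn a b) (ha'b : leansOn a' b) (h : a.2 = b.2) (h' : a'.2 = b.2) : a = a' := by
  by_contra hne
  rcases leansOn_or_leansOn_of_snd_eq hab.2.1 ha'b.2.1 hne (h.trans h'.symm) with l | l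
  · exact hP a ha a' ha' l
  · exact hP a' ha' a ha l

lemma IsProper.not_leansOn_of_fst_eq_of_snd_eq (hcov : IsRopeCover E P) (hP : IsProper P)
    (hb : b ∈ E) (ha : a ∈ P) (ha' : a' ∈ P) (hab : leansOn a b) (ha'b : leansOn a' b)
    (h : a.1 = b.1) (h' : a'.2 = b.2) : False := by
  have hbP : b ∉ P := fun hbP => hP a ha b hbP hab
  obtain ⟨c, hc, hbc⟩ := hcov.2 b (Finset.mem_sdiff.2 ⟨hb, hbP⟩)
  rcases hbc.2.2.2.2 with hc1 | hc2
  · exact hP a ha c hc (leansOn_trans_of_fst_eq hab hbc h hc1)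
  · exact hP a' ha' c hc (leansOn_trans_of_snd_eq ha'b hbc h' hc2)

lemma IsProper.eq_of_leansOn (hcov : IsRopeCover E P) (hP : IsProper P) (hb : b ∈ E)
    (ha : a ∈ P) (ha' : a' ∈ P) (hab : leansOn a b) (ha'b : leansOn a' b) : a = a' := by
  rcases hab.2.2.2.2 with h | h <;> rcases ha'b.2.2.2.2 with h' | h'
  · exact hP.eq_of_leansOn_of_fst_eq ha ha' hab ha'b h h'
  · exact (hP.not_leansOn_of_fst_eq_of_snd_eq hcov hb ha ha' hab ha'b h h').elim
  · exact (hP.not_leansOn_of_fst_eq_of_snd_eq hcov hb ha' ha ha'b hab h' h).elim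
  · exact hP.eq_of_leansOn_of_snd_eq ha ha' hab ha'b h h'

lemma IsProper.eq_of_eq_or_leansOn (hcov : IsRopeCover E P) (hP : IsProper P) (hb : b ∈ E)
    (ha : a ∈ P) (ha' : a' ∈ P) (hab : a = b ∨ leansOn a b) (ha'b : a' = b ∨ leansOn a' b) :
    a = a' := by
  rcases hab with rfl | hab <;> rcases ha'b with rfl | ha'b
  · rfl
  · exact (hP a' ha' a ha ha'b).elim
  · exact (hP a ha a' ha' hab).elim
  · exact hP.eq_of_leansOn hcov hb ha ha' hab ha'b

end Proper

theorem proper_ropeCover_min_card_general (E : Finset (ℕ × ℕ))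
    (Rpr : Finset (ℕ × ℕ)) (hpr : IsRopeCover E Rpr) (hprop : IsProper Rpr)
    (R : Finset (ℕ × ℕ)) (hR : IsRopeCover E R) :
    Rpr.card ≤ R.card :=
  Finset.card_le_card_of_forall_subsingleton (fun a b => a = b ∨ leansOn a b)
    (fun _ ha => hR.exists_eq_or_leansOn (hpr.1 ha))
    (fun _ hb _ ha _ ha' => hprop.eq_of_eq_or_leansOn hpr (hR.1 hb) ha.1 ha'.1 ha.2 ha'.2)

/-- The proper rope cover has minimum cardinality among all rope covers. -/
theorem proper_ropeCover_min_card (E : Finset (ℕ × ℕ)) (hE : ∀ a ∈ E, a.1 < a.2)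
    (Rpr : Finset (ℕ × ℕ)) (hpr : IsRopeCover E Rpr) (hprop : IsProper Rpr)
    (R : Finset (ℕ × ℕ)) (hR : IsRopeCover E R) :
    Rpr.card ≤ R.card :=
  proper_ropeCover_min_card_general E Rpr hpr hprop R hR
end
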